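/- arXiv:2405.13990 — 7 statements merged into one kernel-verified Lean document; each statement's English description precedes it below -/
import Mathlib

section
/- For every real θ, the complex-valued integral of (1 − exp(i·θ·u))·exp(−u)/u with respect to Lebesgue measure over u ∈ (0, ∞) equals (1/2)·log(1 + θ²) − i·arctan(θ). -/
open MeasureTheory Set Filter Complex

/-! Both sides vanish at `θ = 0`, so it suffices to compare derivatives in `θ`. Since
`|1 - e^{iθu}| ≤ |θ| u`, the integrand is dominated by `|θ| e^{-u}` and may be differentiated under
the integral sign; the derivative is `-i ∫₀^∞ e^{(iθ - 1)u} du = -i / (1 - iθ)`, which is also the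
derivative of `log(1 - iθ) = ½ log(1 + θ²) - i arctan θ`. -/

noncomputable def gammaExponentIntegrand (θ u : ℝ) : ℂ :=
  (1 - exp (I * θ * u)) * exp (-(u : ℂ)) / u

lemma norm_gammaExponentIntegrand_le (θ : ℝ) {u : ℝ} (hu : 0 < u) :
    ‖gammaExponentIntegrand θ u‖ ≤ |θ| * Real.exp (-u) := by
  have hexp : ‖1 - exp (I * θ * u)‖ ≤ |θ| * u := by
    simpa [norm_sub_rev, mul_assoc, abs_mul, abs_of_pos hu] using
      Real.norm_exp_I_mul_ofReal_sub_one_le (x := θ * u)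
  rw [gammaExponentIntegrand, norm_div, norm_mul, norm_exp, Complex.norm_of_nonneg hu.le,
    div_le_iff₀ hu, neg_re, ofReal_re]
  calc _ ≤ |θ| * u * Real.exp (-u) := by gcongr
    _ = _ := by ring

lemma integrableOn_gammaExponentIntegrand (θ : ℝ) :
    IntegrableOn (gammaExponentIntegrand θ) (Ioi 0) := by
  refine Integrable.mono' ((integrableOn_exp_neg_Ioi 0).const_mul |θ|) ?_ ?_
  · refine ContinuousOn.aestronglyMeasurable ?_ measurableSet_Ioi
    exact ContinuousOn.div (by fun_prop) (by fun_prop) fun u hu => ofReal_ne_zero.2 hu.ne'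
  · filter_upwards [ae_restrict_mem measurableSet_Ioi] with u hu
    exact norm_gammaExponentIntegrand_le θ hu

lemma hasDerivAt_gammaExponentIntegrand (θ : ℝ) {u : ℝ} (hu : u ≠ 0) :
    HasDerivAt (gammaExponentIntegrand · u) (-I * exp ((I * θ - 1) * u)) θ := by
  have hlin : HasDerivAt (fun t : ℝ => I * t * u) (I * u) θ := by
    simpa using ((hasDerivAt_id (θ : ℂ)).const_mul I).mul_const (u : ℂ) |>.comp_ofReal
  refine (((hlin.cexp.const_sub 1).mul_const (exp (-(u : ℂ)))).div_const (u : ℂ)).congr_deriv ?_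
  rw [sub_one_mul, sub_eq_add_neg, exp_add]
  field_simp [ofReal_ne_zero.2 hu]

lemma integral_exp_I_mul_sub_one_mul (θ : ℝ) :
    ∫ u in Ioi (0 : ℝ), exp ((I * θ - 1) * u) = 1 / (1 - I * θ) := by
  have hre : (I * θ - 1).re < 0 := by simp
  rw [integral_exp_mul_complex_Ioi hre, ofReal_zero, mul_zero, exp_zero, neg_div, ← div_neg,
    neg_sub]

lemma hasDerivAt_integral_gammaExponentIntegrand (θ : ℝ) :
    HasDerivAt (fun t => ∫ u in Ioi (0 : ℝ), gammaExponentIntegrand t u)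
      (-I / (1 - I * θ)) θ := by
  have hbound : ∀ᵐ (u : ℝ) ∂volume.restrict (Ioi 0), ∀ t ∈ Metric.ball θ 1,
      ‖-I * exp ((I * t - 1) * u)‖ ≤ Real.exp (-u) := by
    refine ae_of_all _ fun u t _ => le_of_eq ?_
    simp [norm_exp]
  have key := hasDerivAt_integral_of_dominated_loc_of_deriv_le
    (F' := fun t (u : ℝ) => -I * exp ((I * t - 1) * u)) (Metric.ball_mem_nhds θ one_pos)
    (Eventually.of_forall fun t => (integrableOn_gammaExponentIntegrand t).aestronglyMeasurable)
    (integrableOn_gammaExponentIntegrand θ)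
    (Continuous.aestronglyMeasurable (by fun_prop)) hbound
    (integrableOn_exp_neg_Ioi 0)
    (by
      filter_upwards [ae_restrict_mem measurableSet_Ioi] with u hu t _
      exact hasDerivAt_gammaExponentIntegrand t (ne_of_gt hu))
  rw [integral_const_mul, integral_exp_I_mul_sub_one_mul, mul_one_div] at key
  exact key.2

lemma one_sub_I_mul_ofReal_ne_zero (θ : ℝ) : 1 - I * θ ≠ 0 := fun h => by
  simpa using congrArg re h

lemma hasDerivAt_log_one_add_sq_sub_I_mul_arctan (θ : ℝ) :
    HasDerivAt (fun t : ℝ => ((1 / 2 * Real.log (1 + t ^ 2) : ℝ) : ℂ) - I * (Real.arctan t : ℝ))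
      (-I / (1 - I * θ)) θ := by
  have hpos : 0 < 1 + θ ^ 2 := by positivity
  have hlog : HasDerivAt (fun t : ℝ => 1 / 2 * Real.log (1 + t ^ 2)) (θ / (1 + θ ^ 2)) θ := by
    refine ((((hasDerivAt_pow 2 θ).const_add 1).log hpos.ne').const_mul (1 / 2)).congr_deriv ?_
    push_cast
    field_simp
  refine (hlog.ofReal_comp.sub ((Real.hasDerivAt_arctan θ).ofReal_comp.const_mul I)).congr_deriv ?_
  have hpos' : (1 + θ ^ 2 : ℂ) ≠ 0 := by exact_mod_cast hpos.ne'
  rw [eq_div_iff (one_sub_I_mul_ofReal_ne_zero θ)]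
  push_cast
  field_simp
  linear_combination θ * I_sq

theorem gamma_characteristic_exponent (θ : ℝ) :
    ∫ u in Set.Ioi (0 : ℝ),
        (1 - Complex.exp (Complex.I * θ * u)) * Complex.exp (-(u : ℂ)) / (u : ℂ)
      = ((1 / 2) * Real.log (1 + θ ^ 2) : ℝ) - Complex.I * (Real.arctan θ : ℝ) := by
  set G : ℝ → ℂ := fun t => ((1 / 2 * Real.log (1 + t ^ 2) : ℝ) : ℂ) - I * (Real.arctan t : ℝ)
  set F : ℝ → ℂ := fun t => ∫ u in Ioi (0 : ℝ), gammaExponentIntegrand t u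
  have hderiv (t : ℝ) : HasDerivAt (F - G) 0 t := by
    rw [← sub_self (-I / (1 - I * t))]
    exact (hasDerivAt_integral_gammaExponentIntegrand t).sub
      (hasDerivAt_log_one_add_sq_sub_I_mul_arctan t)
  have hconst := is_const_of_deriv_eq_zero (fun t => (hderiv t).differentiableAt)
    (fun t => (hderiv t).deriv) θ 0
  have hF0 : F 0 = 0 := by simp [F, gammaExponentIntegrand]
  have hG0 : G 0 = 0 := by simp [G, Complex.arctan]
  rw [Pi.sub_apply, Pi.sub_apply, hF0, hG0, sub_zero, sub_eq_zero] at hconst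
  exact hconst
end

section
/- For every real s > 0, the integral of ((1 − cos x)/x)·exp(−s·x) with respect to Lebesgue measure over x ∈ (0, ∞) equals (1/2)·log(1 + s^{−2}). -/
/-!
Writing `(1 - cos x) / x = ∫₀¹ sin (t x) dt` and exchanging the order of integration (the
integrand is bounded by `exp (-s x)`), the integral becomes `∫₀¹ L(t) dt`, where
`L(t) = t / (s² + t²)` is the Laplace transform of `x ↦ sin (t x)` at `s`, i.e. the imaginary part
of `∫₀^∞ exp ((-s + i t) x) dx = 1 / (s - i t)`. Finally `∫₀¹ t / (s² + t²) dt = ½ log ((s² + 1) / s²)`.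
-/

open MeasureTheory Real Set Function

theorem integral_sin_mul_eq_one_sub_cos_div (x : ℝ) :
    ∫ t in (0 : ℝ)..1, sin (t * x) = (1 - cos x) / x := by
  rcases eq_or_ne x 0 with rfl | hx
  · simp -- both sides vanish, the right one as `0 / 0 = 0`
  rw [intervalIntegral.integral_comp_mul_right sin hx, integral_sin]
  simp [div_eq_inv_mul]

theorem sin_mul_mul_exp_neg_eq_im (s t x : ℝ) :
    sin (t * x) * exp (-s * x) = (Complex.exp ((-s + t * Complex.I) * x)).im := by
  rw [Complex.exp_im, mul_comm]
  congr 2 <;> simp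

theorem integral_sin_mul_mul_exp_neg_Ioi {s : ℝ} (hs : 0 < s) (t : ℝ) :
    ∫ x in Ioi 0, sin (t * x) * exp (-s * x) = t / (s ^ 2 + t ^ 2) := by
  have hre : (-s + t * Complex.I).re < 0 := by simpa using hs
  simp_rw [sin_mul_mul_exp_neg_eq_im, ← RCLike.im_to_complex]
  rw [integral_im (integrableOn_exp_mul_complex_Ioi hre 0), integral_exp_mul_complex_Ioi hre]
  simp [Complex.normSq_apply, sq, neg_div]

theorem integrable_sin_mul_mul_exp_neg_prod {s : ℝ} (hs : 0 < s) (a b : ℝ) :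
    Integrable (uncurry fun t x => sin (t * x) * exp (-s * x))
      ((volume.restrict (Ioc a b)).prod (volume.restrict (Ioi 0))) := by
  have hdom : Integrable (fun p : ℝ × ℝ => (1 : ℝ) * exp (-s * p.2))
      ((volume.restrict (Ioc a b)).prod (volume.restrict (Ioi 0))) :=
    (integrable_const 1).mul_prod (exp_neg_integrableOn_Ioi 0 hs)
  refine hdom.mono' (by fun_prop) (ae_of_all _ fun p => ?_)
  simp only [uncurry, norm_mul, norm_eq_abs, abs_exp]
  gcongr
  exact abs_sin_le_one _

theorem integral_div_add_sq {c : ℝ} (hc : 0 < c) (a b : ℝ) :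
    ∫ t in a..b, t / (c + t ^ 2) = (log (c + b ^ 2) - log (c + a ^ 2)) / 2 := by
  have hderiv (t : ℝ) : HasDerivAt (fun u => log (c + u ^ 2) / 2) (t / (c + t ^ 2)) t := by
    have hne : c + t ^ 2 ≠ 0 := by positivity
    refine ((((hasDerivAt_pow 2 t).const_add c).log hne).div_const 2).congr_deriv ?_
    field_simp
    ring
  rw [intervalIntegral.integral_eq_sub_of_hasDerivAt (fun t _ => hderiv t), sub_div]
  exact (continuous_id.div (by fun_prop) fun t => by positivity).intervalIntegrable a b

theorem damped_cosine_integral (s : ℝ) (hs : 0 < s) :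
    ∫ x in Set.Ioi (0 : ℝ), ((1 - Real.cos x) / x) * Real.exp (-s * x)
      = (1 / 2) * Real.log (1 + (s ^ 2)⁻¹) := by
  calc ∫ x in Ioi 0, (1 - cos x) / x * exp (-s * x)
      = ∫ x in Ioi 0, ∫ t in Ioc 0 1, sin (t * x) * exp (-s * x) := by
        simp_rw [← integral_sin_mul_eq_one_sub_cos_div, intervalIntegral.integral_of_le zero_le_one,
          integral_mul_const]
    _ = ∫ t in Ioc 0 1, ∫ x in Ioi 0, sin (t * x) * exp (-s * x) :=
        (integral_integral_swap (integrable_sin_mul_mul_exp_neg_prod hs 0 1)).symm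
    _ = ∫ t in (0 : ℝ)..1, t / (s ^ 2 + t ^ 2) := by
        simp_rw [integral_sin_mul_mul_exp_neg_Ioi hs, intervalIntegral.integral_of_le zero_le_one]
    _ = (1 / 2) * log (1 + (s ^ 2)⁻¹) := by
        rw [integral_div_add_sq (by positivity), ← log_div (by positivity) (by positivity),
          one_div_mul_eq_div]
        congr 2
        field_simp
        ring
end

section
/- Let (X, 𝒜, λ) be a σ-finite measure space, let f : X → ℝ be measurable with ∫_X log(1 + |f(x)|) dλ(x) < ∞, and let β ∈ [−1, 1] with β ≠ 0. Suppose ν is a Borel probability measure on ℝ whose characteristic function satisfies, for every real θ, ∫_ℝ exp(i·θ·y) dν(y) = exp( −(1/2)·∫_X log(1 + θ²·f(x)²) dλ(x) + i·β·∫_X arctan(θ·f(x)) dλ(x) ). Then for every ε with 0 < ε ≤ 1/2, ν({y ∈ ℝ : |y| > ε}) ≤ (3/ε)·∫_X log(1 + |f(x)|) dλ(x). -/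
/-!
For `r > 0`, Fubini and `∫_{-r}^{r} e^{ity} dt = 2r sinc(ry)` give
`∫_{-r}^{r} Re(1 - φ(t)) dt = 2r ∫ (1 - sinc(ry)) dν(y)`, and since `sinc ≤ 21/100` beyond `13/5`
this is at least `2r (79/100) ν{|y| > ε}` once `rε = 13/5`.
On the other side `φ(t) = exp(-a + ib)` with `Re(1 - e^{-a+ib}) ≤ a + b²/2`, and the pointwise
bounds `log(1 + θ²u²) ≤ 2 max(1,|θ|) log(1+|u|)`, `|arctan(θu)| ≤ (8/5) max(1,|θ|) log(1+|u|)` give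
`a ≤ max(1,|t|) Φ` and `|b| ≤ (8/5) max(1,|t|) Φ`, where `Φ = ∫ log(1+|f|) dλ`.
Integrating over `[-r, r]` with `r = 13/(5ε)` yields the bound when `Φ < ε/3`; otherwise the
right-hand side is at least `1`.
-/

open MeasureTheory Real Complex

namespace Real

lemma abs_arctan (x : ℝ) : |arctan x| = arctan |x| := by
  rcases le_total 0 x with hx | hx
  · rw [abs_of_nonneg hx, abs_of_nonneg (arctan_nonneg.2 hx)]
  · rw [abs_of_nonpos hx, abs_of_nonpos (by simpa using arctan_strictMono.monotone hx), arctan_neg]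

lemma arctan_le_log_one_add {v : ℝ} (hv : 0 ≤ v) : arctan v ≤ 8 / 5 * log (1 + v) := by
  set g : ℝ → ℝ := fun x ↦ 8 / 5 * log (1 + x) - arctan x
  have hg : ∀ x, 0 ≤ x → HasDerivAt g (8 / 5 * (1 + x)⁻¹ - 1 / (1 + x ^ 2)) x := fun x hx ↦
    ((((hasDerivAt_id x).const_add 1).log (by simp; linarith)).const_mul (8 / 5)).sub
      (hasDerivAt_arctan x) |>.congr_deriv (by simp)
  have hmono : MonotoneOn g (Set.Ici 0) := by
    refine monotoneOn_of_deriv_nonneg (convex_Ici 0)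
      (fun x hx ↦ (hg x hx).continuousAt.continuousWithinAt)
      (fun x hx ↦ ?_) (fun x hx ↦ ?_) <;> rw [interior_Ici] at hx
    · exact (hg x (le_of_lt hx)).differentiableAt.differentiableWithinAt
    · rw [(hg x (le_of_lt hx)).deriv, sub_nonneg, ← div_eq_mul_inv,
        div_le_div_iff₀ (by positivity) (by linarith [hx.out])]
      nlinarith [sq_nonneg (x - 5 / 16)]
  simpa [g] using hmono Set.self_mem_Ici hv hv

lemma log_one_add_mul_le {t u : ℝ} (ht : 0 ≤ t) (hu : 0 ≤ u) :
    log (1 + t * u) ≤ max 1 t * log (1 + u) := by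
  rcases le_total t 1 with h | h
  · rw [max_eq_left h, one_mul]
    exact log_le_log (by positivity) (by nlinarith)
  · rw [max_eq_right h, ← log_rpow (by linarith)]
    exact log_le_log (by positivity) (one_add_mul_self_le_rpow_one_add (by linarith) h)

lemma log_one_add_sq_mul_sq_le (θ u : ℝ) :
    log (1 + θ ^ 2 * u ^ 2) ≤ 2 * max 1 |θ| * log (1 + |u|) := by
  calc log (1 + θ ^ 2 * u ^ 2) ≤ log ((1 + |θ| * |u|) ^ 2) := by
        refine log_le_log (by positivity) ?_
        rw [← sq_abs θ, ← sq_abs u]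
        nlinarith [mul_nonneg (abs_nonneg θ) (abs_nonneg u)]
    _ = 2 * log (1 + |θ| * |u|) := by simp [log_pow]
    _ ≤ 2 * max 1 |θ| * log (1 + |u|) := by
        rw [mul_assoc]
        gcongr
        exact log_one_add_mul_le (abs_nonneg θ) (abs_nonneg u)

lemma abs_arctan_mul_le (θ u : ℝ) :
    |arctan (θ * u)| ≤ 8 / 5 * max 1 |θ| * log (1 + |u|) := by
  rw [abs_arctan, abs_mul, mul_assoc]
  refine (arctan_le_log_one_add (by positivity)).trans ?_
  gcongr
  exact log_one_add_mul_le (abs_nonneg θ) (abs_nonneg u)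

lemma sin_le_mul_of_le {t : ℝ} (ht : 13 / 5 ≤ t) : sin t ≤ 21 / 100 * t := by
  have hπ : π < 3.1416 := pi_lt_d4
  have hπ3 : 3 < π := pi_gt_three
  rcases le_total t π with h | h
  · rw [← sin_pi_sub]
    linarith [sin_le (by linarith : 0 ≤ π - t)]
  rcases le_total t (2 * π) with h2 | h2
  · rw [← neg_neg (sin t), ← sin_sub_pi]
    linarith [sin_nonneg_of_nonneg_of_le_pi (by linarith : 0 ≤ t - π) (by linarith)]
  · linarith [sin_le_one t]

lemma sinc_le_of_le_abs {t : ℝ} (ht : 13 / 5 ≤ |t|) : sinc t ≤ 21 / 100 := by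
  wlog h : 0 ≤ t generalizing t
  · simpa using this (t := -t) (by rwa [abs_neg]) (by linarith)
  rw [abs_of_nonneg h] at ht
  rw [sinc_of_ne_zero (by linarith), div_le_iff₀ (by linarith)]
  exact sin_le_mul_of_le ht

lemma one_sub_exp_neg_mul_cos_le {a : ℝ} (ha : 0 ≤ a) (b : ℝ) :
    1 - exp (-a) * cos b ≤ a + b ^ 2 / 2 := by
  have hexp : exp (-a) ≤ 1 := exp_le_one_iff.2 (by linarith)
  have hcos : 0 ≤ 1 - cos b := by linarith [cos_le_one b]
  nlinarith [add_one_le_exp (-a), one_sub_sq_div_two_le_cos (x := b),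
    mul_le_mul_of_nonneg_right hexp hcos]

end Real

lemma MeasureTheory.measureReal_abs_gt_mul_le_integral_re_one_sub_charFun {μ : Measure ℝ}
    [IsProbabilityMeasure μ] {r ε s : ℝ} (hr : 0 < r)
    (hs : ∀ x, ε < |x| → sinc (r * x) ≤ s) :
    2 * r * (1 - s) * μ.real {x | ε < |x|} ≤ ∫ t in -r..r, (1 - charFun μ t).re := by
  have h_int : Integrable (fun x ↦ sinc (r * x)) μ :=
    (integrable_const 1).mono' (by fun_prop) (ae_of_all _ fun x ↦ abs_sinc_le_one _)
  have h_kernel : ∫ t in -r..r, (1 - charFun μ t).re = 2 * r * ∫ x, (1 - sinc (r * x)) ∂μ := by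
    have h_re := intervalIntegral.intervalIntegral_re (a := -r) (b := r) (μ := volume)
      ((intervalIntegrable_const (c := (1 : ℂ))).sub (intervalIntegrable_charFun (μ := μ)))
    simp only [RCLike.re_to_complex] at h_re
    rw [h_re, intervalIntegral.integral_sub intervalIntegrable_const intervalIntegrable_charFun,
      integral_charFun_Icc hr, integral_sub (integrable_const 1) h_int]
    norm_cast
    simp only [intervalIntegral.integral_const, sub_neg_eq_add, real_smul, ofReal_add, mul_one,
      ofReal_mul, ofReal_ofNat, sub_re, add_re, ofReal_re, mul_re, re_ofNat, im_ofNat, ofReal_im,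
      mul_zero, sub_zero, mul_im, zero_mul, add_zero, integral_const, probReal_univ, smul_eq_mul]
    ring
  have hT : MeasurableSet {x : ℝ | ε < |x|} := measurableSet_lt measurable_const measurable_abs
  rw [h_kernel, mul_assoc]
  gcongr
  calc (1 - s) * μ.real {x | ε < |x|} ≤ ∫ x in {x | ε < |x|}, (1 - sinc (r * x)) ∂μ := by
        rw [mul_comm]
        exact setIntegral_ge_of_const_le hT (measure_ne_top μ _)
          (fun x hx ↦ by linarith [hs x hx]) ((integrable_const 1).sub h_int).integrableOn
    _ ≤ ∫ x, (1 - sinc (r * x)) ∂μ :=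
        setIntegral_le_integral ((integrable_const 1).sub h_int)
          (ae_of_all _ fun x ↦ sub_nonneg.2 (sinc_le_one _))

lemma integral_max_one_abs_pow {r : ℝ} (hr : 1 ≤ r) (n : ℕ) :
    ∫ θ in -r..r, max 1 |θ| ^ n = 2 * (r ^ (n + 1) + n) / (n + 1) := by
  have hcont : Continuous fun θ : ℝ ↦ max 1 |θ| ^ n := by fun_prop
  have h_even : ∫ θ in -r..0, max 1 |θ| ^ n = ∫ θ in (0:ℝ)..r, max 1 |θ| ^ n := by
    simpa using
      (intervalIntegral.integral_comp_neg (a := 0) (b := r) (fun θ ↦ max 1 |θ| ^ n)).symm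
  have h_one : ∫ θ in (0:ℝ)..1, max 1 |θ| ^ n = ∫ θ in (0:ℝ)..1, (1:ℝ) :=
    intervalIntegral.integral_congr fun θ hθ ↦ by
      rw [Set.uIcc_of_le zero_le_one] at hθ
      simp [abs_of_nonneg hθ.1, hθ.2]
  have h_far : ∫ θ in (1:ℝ)..r, max 1 |θ| ^ n = ∫ θ in (1:ℝ)..r, θ ^ n :=
    intervalIntegral.integral_congr fun θ hθ ↦ by
      rw [Set.uIcc_of_le hr] at hθ
      simp [abs_of_nonneg (by linarith [hθ.1] : (0:ℝ) ≤ θ), hθ.1]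
  rw [← intervalIntegral.integral_add_adjacent_intervals (b := 0) (hcont.intervalIntegrable _ _)
    (hcont.intervalIntegrable _ _), h_even,
    ← intervalIntegral.integral_add_adjacent_intervals (b := 1) (hcont.intervalIntegrable _ _)
    (hcont.intervalIntegrable _ _), h_one, h_far, integral_pow]
  simp only [intervalIntegral.integral_const, sub_zero, smul_eq_mul, mul_one, one_pow]
  field_simp
  ring

lemma MeasureTheory.integral_re_one_sub_charFun_le {μ : Measure ℝ} [IsFiniteMeasure μ]
    {A B r : ℝ} (hr : 1 ≤ r) (h : ∀ t, (1 - charFun μ t).re ≤ A * max 1 |t| + B * max 1 |t| ^ 2) :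
    ∫ t in -r..r, (1 - charFun μ t).re ≤ A * (r ^ 2 + 1) + B * (2 * (r ^ 3 + 2) / 3) := by
  have hA : Continuous fun t : ℝ ↦ A * max 1 |t| := by fun_prop
  have hB : Continuous fun t : ℝ ↦ B * max 1 |t| ^ 2 := by fun_prop
  have h1 := integral_max_one_abs_pow hr 1
  have h2 := integral_max_one_abs_pow hr 2
  norm_num at h1 h2
  calc ∫ t in -r..r, (1 - charFun μ t).re
      ≤ ∫ t in -r..r, (A * max 1 |t| + B * max 1 |t| ^ 2) :=
        intervalIntegral.integral_mono_on (by linarith)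
          ((continuous_re.comp (continuous_const.sub continuous_charFun)).intervalIntegrable _ _)
          ((hA.add hB).intervalIntegrable _ _) fun t _ ↦ h t
    _ = A * (r ^ 2 + 1) + B * (2 * (r ^ 3 + 2) / 3) := by
        rw [intervalIntegral.integral_add (hA.intervalIntegrable _ _) (hB.intervalIntegrable _ _),
          intervalIntegral.integral_const_mul, intervalIntegral.integral_const_mul, h1, h2]

section LogModular

variable {X : Type*} [MeasurableSpace X] {lam : Measure X} {f : X → ℝ}

lemma integral_log_one_add_sq_mul_sq_le (hf : Integrable (fun x ↦ Real.log (1 + |f x|)) lam)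
    (θ : ℝ) :
    ∫ x, Real.log (1 + θ ^ 2 * f x ^ 2) ∂lam
      ≤ 2 * max 1 |θ| * ∫ x, Real.log (1 + |f x|) ∂lam := by
  rw [← integral_const_mul]
  exact integral_mono_of_nonneg
    (ae_of_all _ fun x ↦ Real.log_nonneg (le_add_of_nonneg_right (by positivity))) (hf.const_mul _)
    (ae_of_all _ fun x ↦ Real.log_one_add_sq_mul_sq_le θ (f x))

lemma abs_integral_arctan_mul_le (hf : Integrable (fun x ↦ Real.log (1 + |f x|)) lam)
    (θ : ℝ) :
    |∫ x, Real.arctan (θ * f x) ∂lam| ≤ 8 / 5 * max 1 |θ| * ∫ x, Real.log (1 + |f x|) ∂lam := by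
  rw [← integral_const_mul]
  exact abs_integral_le_integral_abs.trans <| integral_mono_of_nonneg
    (ae_of_all _ fun x ↦ abs_nonneg _) (hf.const_mul _)
    (ae_of_all _ fun x ↦ Real.abs_arctan_mul_le θ (f x))

lemma re_one_sub_charFun_le_of_eq_exp {ν : Measure ℝ}
    (hf : Integrable (fun x ↦ Real.log (1 + |f x|)) lam) {β : ℝ} (hβ : |β| ≤ 1) {θ : ℝ}
    (hθ : charFun ν θ = cexp (-((1 / 2 : ℝ) * ∫ x, Real.log (1 + θ ^ 2 * f x ^ 2) ∂lam : ℝ)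
      + I * ((β * ∫ x, Real.arctan (θ * f x) ∂lam : ℝ) : ℂ))) :
    (1 - charFun ν θ).re ≤ (∫ x, Real.log (1 + |f x|) ∂lam) * max 1 |θ|
      + 32 / 25 * (∫ x, Real.log (1 + |f x|) ∂lam) ^ 2 * max 1 |θ| ^ 2 := by
  have ha := integral_log_one_add_sq_mul_sq_le hf θ
  have ha0 : 0 ≤ ∫ x, Real.log (1 + θ ^ 2 * f x ^ 2) ∂lam :=
    integral_nonneg fun x ↦ Real.log_nonneg (le_add_of_nonneg_right (by positivity))
  have hb := abs_integral_arctan_mul_le hf θ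
  set Φ := ∫ x, Real.log (1 + |f x|) ∂lam
  set a := ∫ x, Real.log (1 + θ ^ 2 * f x ^ 2) ∂lam
  set b := β * ∫ x, Real.arctan (θ * f x) ∂lam with hb_def
  replace hb : |b| ≤ 8 / 5 * max 1 |θ| * Φ := by
    rw [hb_def, abs_mul]
    exact (mul_le_of_le_one_left (abs_nonneg _) hβ).trans hb
  have hb2 : b ^ 2 ≤ (8 / 5 * max 1 |θ| * Φ) ^ 2 := sq_le_sq' (abs_le.1 hb).1 (abs_le.1 hb).2
  rw [hθ, sub_re, one_re, exp_re]
  simp only [add_re, neg_re, ofReal_re, mul_re, I_re, I_im, ofReal_im, add_im, neg_im,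
    mul_im, zero_mul, one_mul, mul_zero, sub_zero, neg_zero, zero_add, add_zero]
  nlinarith [one_sub_exp_neg_mul_cos_le (by linarith : 0 ≤ 1 / 2 * a) b]

end LogModular

lemma le_mul_of_truncation_bound {r Φ P : ℝ} (hr : 26 / 5 ≤ r) (hΦ : 0 ≤ Φ)
    (hΦr : Φ * r ≤ 13 / 15)
    (h : 2 * r * (1 - 21 / 100) * P
      ≤ Φ * (r ^ 2 + 1) + 32 / 25 * Φ ^ 2 * (2 * (r ^ 3 + 2) / 3)) :
    P ≤ 15 / 13 * r * Φ := by
  have hΦ_small : Φ ≤ 1 / 6 := by nlinarith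
  have hΦr3 : Φ * r ^ 3 ≤ 13 / 15 * r ^ 2 := by nlinarith
  have hinner : r ^ 2 + 1 + 64 / 75 * Φ * (r ^ 3 + 2) ≤ 237 / 130 * r ^ 2 := by nlinarith
  refine le_of_mul_le_mul_left (h.trans ?_) (by positivity : 0 < 2 * r * (1 - 21 / 100))
  nlinarith [mul_le_mul_of_nonneg_left hinner hΦ]

theorem chebyshev_tail_compound_gamma_general
    {X : Type*} [MeasurableSpace X] (lam : Measure X)
    (f : X → ℝ)
    (hf_int : Integrable (fun x => Real.log (1 + |f x|)) lam)
    (β : ℝ) (hβ : β ∈ Set.Icc (-1 : ℝ) 1)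
    (ν : Measure ℝ) [IsProbabilityMeasure ν]
    (hchar : ∀ θ : ℝ,
      ∫ y, Complex.exp (Complex.I * θ * y) ∂ν
        = Complex.exp
            (-((1 / 2 : ℝ) * ∫ x, Real.log (1 + θ ^ 2 * (f x) ^ 2) ∂lam : ℝ)
              + Complex.I * ((β * ∫ x, Real.arctan (θ * f x) ∂lam : ℝ) : ℂ)))
    (ε : ℝ) (hε0 : 0 < ε) (hε : ε ≤ 1 / 2) :
    (ν {y : ℝ | ε < |y|}).toReal
      ≤ (3 / ε) * ∫ x, Real.log (1 + |f x|) ∂lam := by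
  set Φ := ∫ x, Real.log (1 + |f x|) ∂lam
  have hΦ : 0 ≤ Φ := integral_nonneg fun x ↦ Real.log_nonneg (by linarith [abs_nonneg (f x)])
  rcases le_or_gt (ε / 3) Φ with hΦε | hΦε
  · calc (ν {y : ℝ | ε < |y|}).toReal ≤ 1 := measureReal_le_one
      _ ≤ 3 / ε * Φ := by rw [div_mul_eq_mul_div, le_div_iff₀ hε0]; linarith
  set r := 13 / (5 * ε) with hr_def
  have hrε : r * ε = 13 / 5 := by rw [hr_def]; field_simp
  have hr : 26 / 5 ≤ r := by rw [le_div_iff₀ (by positivity)]; linarith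
  have hcharFun (θ : ℝ) : charFun ν θ = ∫ y, cexp (I * θ * y) ∂ν := by
    rw [charFun_apply_real]
    congr 1 with y
    congr 1
    ring
  have hlower := measureReal_abs_gt_mul_le_integral_re_one_sub_charFun (μ := ν) (ε := ε)
    (by positivity : 0 < r) fun y hy ↦ Real.sinc_le_of_le_abs (by
      rw [abs_mul, abs_of_pos (by positivity : 0 < r)]; nlinarith)
  have hupper := integral_re_one_sub_charFun_le (μ := ν) (by linarith : 1 ≤ r) fun θ ↦
    re_one_sub_charFun_le_of_eq_exp hf_int (abs_le.2 hβ) ((hcharFun θ).trans (hchar θ))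
  have hbound := le_mul_of_truncation_bound hr hΦ (by nlinarith) (hlower.trans hupper)
  calc (ν {y : ℝ | ε < |y|}).toReal ≤ 15 / 13 * r * Φ := hbound
    _ = 3 / ε * Φ := by rw [hr_def]; field_simp; ring

theorem chebyshev_tail_compound_gamma
    {X : Type*} [MeasurableSpace X] (lam : Measure X) [SigmaFinite lam]
    (f : X → ℝ) (hf : Measurable f)
    (hf_int : Integrable (fun x => Real.log (1 + |f x|)) lam)
    (β : ℝ) (hβ : β ∈ Set.Icc (-1 : ℝ) 1) (hβ0 : β ≠ 0)
    (ν : Measure ℝ) [IsProbabilityMeasure ν]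
    (hchar : ∀ θ : ℝ,
      ∫ y, Complex.exp (Complex.I * θ * y) ∂ν
        = Complex.exp
            (-((1 / 2 : ℝ) * ∫ x, Real.log (1 + θ ^ 2 * (f x) ^ 2) ∂lam : ℝ)
              + Complex.I * ((β * ∫ x, Real.arctan (θ * f x) ∂lam : ℝ) : ℂ)))
    (ε : ℝ) (hε0 : 0 < ε) (hε : ε ≤ 1 / 2) :
    (ν {y : ℝ | ε < |y|}).toReal
      ≤ (3 / ε) * ∫ x, Real.log (1 + |f x|) ∂lam :=
  chebyshev_tail_compound_gamma_general lam f hf_int β hβ ν hchar ε hε0 hε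
end

section
/- For every real t > 0 and every real θ < 1, the function x ↦ (1 + log x)·x^{θ·x}·t^x / Γ(x + 1) is Lebesgue integrable on (1, ∞), where Γ denotes the real Gamma function and powers are real powers. -/
/-!
Restricting Euler's integral to `s ≥ x` gives `Γ(x + 1) ≥ x ^ x * e ^ (-x)`, so the integrand is
at most `(1 + log x) * (e * t * x ^ (θ - 1)) ^ x`. As `θ < 1` the base tends to `0`, hence the
integrand is eventually bounded by `e ^ (-x)`; being continuous on `[1, ∞)`, it is integrable.
-/

open MeasureTheory Real Filter Set Topology

theorem Real.rpow_self_mul_exp_neg_le_Gamma_add_one {x : ℝ} (hx : 0 ≤ x) :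
    x ^ x * exp (-x) ≤ Gamma (x + 1) := by
  have hΓ := GammaIntegral_convergent (s := x + 1) (by linarith)
  rw [add_sub_cancel_right] at hΓ
  calc x ^ x * exp (-x) = ∫ s in Ioi x, exp (-s) * x ^ x := by
        rw [integral_mul_const, integral_exp_neg_Ioi, mul_comm]
    _ ≤ ∫ s in Ioi x, exp (-s) * s ^ x :=
        setIntegral_mono_on ((integrableOn_exp_neg_Ioi x).mul_const _)
          (hΓ.mono_set (Ioi_subset_Ioi hx)) measurableSet_Ioi
          fun s hs => by gcongr; exact hs.le
    _ ≤ ∫ s in Ioi 0, exp (-s) * s ^ x :=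
        setIntegral_mono_set hΓ
          (ae_restrict_of_forall_mem measurableSet_Ioi fun s (hs : 0 < s) => by positivity)
          (Ioi_subset_Ioi hx).eventuallyLE
    _ = Gamma (x + 1) := by rw [Gamma_eq_integral (by linarith), add_sub_cancel_right]

theorem Real.rpow_mul_mul_rpow_div_Gamma_add_one_le {x t θ : ℝ} (hx : 0 < x) (ht : 0 ≤ t) :
    x ^ (θ * x) * t ^ x / Gamma (x + 1) ≤ (exp 1 * t * x ^ (θ - 1)) ^ x := by
  have hpos : 0 < x ^ x * exp (-x) := by positivity
  calc x ^ (θ * x) * t ^ x / Gamma (x + 1) ≤ x ^ (θ * x) * t ^ x / (x ^ x * exp (-x)) := by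
        gcongr; exact rpow_self_mul_exp_neg_le_Gamma_add_one hx.le
    _ = (exp 1 * t * x ^ (θ - 1)) ^ x := by
        rw [mul_rpow (by positivity) (by positivity), mul_rpow (by positivity) ht,
          exp_one_rpow, ← rpow_mul hx.le, sub_mul, one_mul, rpow_sub hx, exp_neg]
        field_simp

theorem eventually_one_add_log_mul_rpow_le_exp_neg {t θ : ℝ} (ht : 0 ≤ t) (hθ : θ < 1) :
    ∀ᶠ x in atTop, (1 + log x) * (exp 1 * t * x ^ (θ - 1)) ^ x ≤ exp (-x) := by
  have hbase : Tendsto (fun x : ℝ => exp 1 * t * x ^ (θ - 1)) atTop (𝓝 0) := by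
    rw [← neg_sub, ← mul_zero (exp 1 * t)]
    exact (tendsto_rpow_neg_atTop (sub_pos.2 hθ)).const_mul _
  filter_upwards [eventually_gt_atTop 0, hbase.eventually (ge_mem_nhds (exp_pos (-2)))]
    with x hx hsmall
  have hlog : 1 + log x ≤ exp x := by linarith [log_le_sub_one_of_pos hx, add_one_le_exp x]
  calc (1 + log x) * (exp 1 * t * x ^ (θ - 1)) ^ x ≤ exp x * exp (-2) ^ x := by gcongr
    _ = exp (-x) := by rw [← exp_mul, ← exp_add]; ring_nf

theorem inverse_gamma_hyperexp_integrable (t θ : ℝ) (ht : 0 < t) (hθ : θ < 1) :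
    IntegrableOn
      (fun x : ℝ => (1 + Real.log x) * x ^ (θ * x) * t ^ x / Real.Gamma (x + 1))
      (Set.Ioi (1 : ℝ)) := by
  have hΓ : ContinuousOn (fun x : ℝ => Gamma (x + 1)) (Ici 1) :=
    differentiableOn_Gamma_Ioi.continuousOn.comp (continuousOn_id.add continuousOn_const)
      fun x (hx : 1 ≤ x) => show 0 < x + 1 by linarith
  refine integrable_of_isBigO_exp_neg one_pos ?_ (Asymptotics.IsBigO.of_bound 1 ?_)
  · refine ContinuousOn.div (fun x (hx : 1 ≤ x) => ContinuousAt.continuousWithinAt ?_) hΓ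
      fun x (hx : 1 ≤ x) => (Gamma_pos_of_pos (by linarith)).ne'
    have hx0 : x ≠ 0 := by positivity
    exact ((continuousAt_const.add (continuousAt_log hx0)).mul
      (continuousAt_id.rpow (continuousAt_const.mul continuousAt_id) (.inl hx0))).mul
      (continuousAt_const.rpow continuousAt_id (.inl ht.ne'))
  · filter_upwards [eventually_ge_atTop 1, eventually_one_add_log_mul_rpow_le_exp_neg ht.le hθ]
      with x hx hdecay
    have hΓpos := Gamma_pos_of_pos (by linarith : 0 < x + 1)
    have hlog : 0 ≤ 1 + log x := by linarith [log_nonneg hx]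
    rw [norm_of_nonneg (by positivity), norm_of_nonneg (exp_pos _).le, one_mul, neg_one_mul]
    calc (1 + log x) * x ^ (θ * x) * t ^ x / Gamma (x + 1)
        = (1 + log x) * (x ^ (θ * x) * t ^ x / Gamma (x + 1)) := by ring
      _ ≤ (1 + log x) * (exp 1 * t * x ^ (θ - 1)) ^ x := by
        gcongr; exact rpow_mul_mul_rpow_div_Gamma_add_one_le (by linarith) ht.le
      _ ≤ exp (-x) := hdecay
end

section
/- For every real t > 0, the function x ↦ (1 + log x)·x^x·t^x / Γ(x + 1) is Lebesgue integrable on (1, ∞) if and only if t < e^{−1}, where Γ denotes the real Gamma function and x^x, t^x denote real powers. -/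
/-!
Writing `t ^ x = (e t) ^ x e ^ (-x)`, the integrand is `(1 + log x) (e t) ^ x` times the Stirling
ratio `x ^ x e ^ (-x) / Γ(x + 1)`. Crude Stirling bounds from Euler's integral (below: restrict it
to `[x, x + 1]`; above: bound `u ^ x e ^ (-x u / (x + 1))` by its maximum) squeeze this ratio
between `1 / (2 e x)` and `e` for `x ≥ 1`. Hence for `e t < 1` the integrand is dominated by the
integrable `e x (e t) ^ x`, while for `e t ≥ 1` it dominates the non-integrable `1 / (2 e x)`.
-/

open MeasureTheory Real Set

lemma exp_neg_mul_mul_rpow_le {a x u : ℝ} (ha : 0 < a) (hx : 0 < x) (hu : 0 < u) :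
    exp (-(a * u)) * u ^ x ≤ (x / a) ^ x * exp (-x) := by
  have hlog : log (a * u / x) ≤ a * u / x - 1 := log_le_sub_one_of_pos (by positivity)
  rw [log_div (by positivity) hx.ne', log_mul ha.ne' hu.ne'] at hlog
  rw [rpow_def_of_pos hu, rpow_def_of_pos (div_pos hx ha), log_div hx.ne' ha.ne',
    ← exp_add, ← exp_add, exp_le_exp]
  have := mul_le_mul_of_nonneg_left hlog hx.le
  have hau : x * (a * u / x) = a * u := mul_div_cancel₀ _ hx.ne'
  linarith

lemma Gamma_add_one_le_rpow_mul_exp_neg {x : ℝ} (hx : 0 < x) :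
    Gamma (x + 1) ≤ (x + 1) ^ (x + 1) * exp (-x) := by
  set C := (x + 1) ^ x * exp (-x)
  have hdecay : -(x + 1)⁻¹ < 0 := neg_neg_of_pos (by positivity)
  -- `exp (-(x / (x + 1) * u)) * u ^ x` is maximal at `u = x + 1`.
  have hpt : ∀ u ∈ Ioi (0 : ℝ), exp (-u) * u ^ x ≤ C * exp (-(x + 1)⁻¹ * u) := by
    intro u hu
    have key := exp_neg_mul_mul_rpow_le (a := x / (x + 1)) (by positivity) hx hu
    rw [div_div_cancel₀ hx.ne'] at key
    calc exp (-u) * u ^ x = exp (-(x + 1)⁻¹ * u) * (exp (-(x / (x + 1) * u)) * u ^ x) := by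
          rw [← mul_assoc, ← exp_add]; congr 2; field_simp; ring
      _ ≤ C * exp (-(x + 1)⁻¹ * u) := by
          rw [mul_comm C]; exact mul_le_mul_of_nonneg_left key (exp_pos _).le
  calc Gamma (x + 1) = ∫ u in Ioi 0, exp (-u) * u ^ x := by
        rw [Gamma_eq_integral (by positivity), add_sub_cancel_right]
    _ ≤ ∫ u in Ioi 0, C * exp (-(x + 1)⁻¹ * u) :=
        setIntegral_mono_on (by simpa using GammaIntegral_convergent (s := x + 1) (by positivity))
          ((integrableOn_exp_mul_Ioi hdecay 0).const_mul C) measurableSet_Ioi hpt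
    _ = (x + 1) ^ (x + 1) * exp (-x) := by
        rw [integral_const_mul, integral_exp_mul_Ioi hdecay, mul_zero, exp_zero,
          rpow_add_one (by positivity)]
        field_simp
        ring

lemma one_add_inv_rpow_le_exp_one {x : ℝ} (hx : 0 < x) : (1 + x⁻¹) ^ x ≤ exp 1 := by
  have hlog : log (1 + x⁻¹) ≤ x⁻¹ := by
    linarith [log_le_sub_one_of_pos (by positivity : 0 < 1 + x⁻¹)]
  rw [rpow_def_of_pos (by positivity), exp_le_exp]
  calc log (1 + x⁻¹) * x ≤ x⁻¹ * x := mul_le_mul_of_nonneg_right hlog hx.le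
    _ = 1 := inv_mul_cancel₀ hx.ne'

lemma Gamma_add_one_le_of_one_le {x : ℝ} (hx : 1 ≤ x) :
    Gamma (x + 1) ≤ 2 * exp 1 * x * (x ^ x * exp (-x)) := by
  have hx0 : 0 < x := by linarith
  have hsplit : (x + 1) ^ (x + 1) = (x + 1) * (x ^ x * (1 + x⁻¹) ^ x) := by
    rw [rpow_add_one (by positivity), ← mul_rpow hx0.le (by positivity), mul_comm]
    congr 2
    field_simp
  calc Gamma (x + 1) ≤ (x + 1) * (x ^ x * (1 + x⁻¹) ^ x) * exp (-x) :=
        hsplit ▸ Gamma_add_one_le_rpow_mul_exp_neg hx0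
    _ ≤ (2 * x) * (x ^ x * exp 1) * exp (-x) := by
        gcongr
        · linarith
        · exact one_add_inv_rpow_le_exp_one hx0
    _ = 2 * exp 1 * x * (x ^ x * exp (-x)) := by ring

lemma rpow_self_mul_exp_neg_le_exp_one_mul_Gamma {x : ℝ} (hx : 0 ≤ x) :
    x ^ x * exp (-x) ≤ exp 1 * Gamma (x + 1) := by
  have hint : IntegrableOn (fun u : ℝ => exp (-u) * u ^ x) (Ioi 0) := by
    simpa using GammaIntegral_convergent (s := x + 1) (by positivity)
  have hpt : ∀ u ∈ Ioc x (x + 1), exp (-(x + 1)) * x ^ x ≤ exp (-u) * u ^ x := fun u hu => by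
    gcongr
    · linarith [hu.2]
    · exact hu.1.le
  have hwindow : exp (-(x + 1)) * x ^ x ≤ ∫ u in Ioc x (x + 1), exp (-u) * u ^ x := by
    calc exp (-(x + 1)) * x ^ x = ∫ _ in Ioc x (x + 1), exp (-(x + 1)) * x ^ x := by
          simp [Real.volume_real_Ioc]
      _ ≤ ∫ u in Ioc x (x + 1), exp (-u) * u ^ x :=
          setIntegral_mono_on (integrableOn_const (by simp)) (hint.mono_set fun u hu =>
            lt_of_le_of_lt hx hu.1) measurableSet_Ioc hpt
  have hsub : ∫ u in Ioc x (x + 1), exp (-u) * u ^ x ≤ Gamma (x + 1) := by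
    rw [Gamma_eq_integral (by positivity), add_sub_cancel_right]
    refine setIntegral_mono_set hint ?_ (show Ioc x (x + 1) ⊆ Ioi 0 from
      fun u hu => lt_of_le_of_lt hx hu.1).eventuallyLE
    filter_upwards [ae_restrict_mem measurableSet_Ioi] with u hu
    exact mul_nonneg (exp_pos _).le (rpow_nonneg (le_of_lt hu) x)
  calc x ^ x * exp (-x) = exp 1 * (exp (-(x + 1)) * x ^ x) := by
        rw [← mul_assoc, ← exp_add]; ring_nf
    _ ≤ exp 1 * Gamma (x + 1) := by gcongr; exact hwindow.trans hsub

lemma integrableOn_Ioi_mul_rpow_of_lt_one {r : ℝ} (hr0 : 0 < r) (hr1 : r < 1) :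
    IntegrableOn (fun x : ℝ => x * r ^ x) (Ioi 0) := by
  refine (integrableOn_rpow_mul_exp_neg_mul_rpow (s := 1) (p := 1) (b := -log r) (by norm_num)
    one_pos (by simpa using log_neg hr0 hr1)).congr_fun (fun x _ => ?_) measurableSet_Ioi
  dsimp only
  rw [neg_neg, rpow_def_of_pos hr0, rpow_one]

noncomputable def hyperexpIntegrand (t x : ℝ) : ℝ := (1 + log x) * x ^ x * t ^ x / Gamma (x + 1)

lemma hyperexpIntegrand_eq {t : ℝ} (ht : 0 ≤ t) (x : ℝ) :
    hyperexpIntegrand t x =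
      (1 + log x) * (exp 1 * t) ^ x * (x ^ x * exp (-x) / Gamma (x + 1)) := by
  rw [hyperexpIntegrand, mul_rpow (exp_pos 1).le ht, exp_one_rpow, exp_neg]
  field_simp

lemma continuousOn_hyperexpIntegrand {t : ℝ} (ht : 0 < t) :
    ContinuousOn (hyperexpIntegrand t) (Ioi 0) := by
  intro x (hx : 0 < x)
  have hGamma : ContinuousAt (fun y => Gamma (y + 1)) x := by
    refine ((differentiableAt_Gamma fun m => ?_).continuousAt).comp
      (continuousAt_id.add continuousAt_const)
    have : (0 : ℝ) ≤ m := m.cast_nonneg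
    linarith
  refine ContinuousAt.continuousWithinAt (ContinuousAt.div ?_ hGamma
    (Gamma_pos_of_pos (by linarith)).ne')
  exact ((continuousAt_const.add (continuousAt_log hx.ne')).mul
    (continuousAt_id.rpow continuousAt_id (Or.inl hx.ne'))).mul
    (continuousAt_const.rpow continuousAt_id (Or.inl ht.ne'))

lemma norm_hyperexpIntegrand_le {t x : ℝ} (ht : 0 < t) (hx : 1 ≤ x) :
    ‖hyperexpIntegrand t x‖ ≤ exp 1 * (x * (exp 1 * t) ^ x) := by
  have hx0 : 0 < x := by linarith
  have hlog : 0 ≤ log x := log_nonneg hx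
  have hratio : x ^ x * exp (-x) / Gamma (x + 1) ≤ exp 1 :=
    (div_le_iff₀ (Gamma_pos_of_pos (by linarith))).2
      (rpow_self_mul_exp_neg_le_exp_one_mul_Gamma hx0.le)
  rw [hyperexpIntegrand_eq ht.le, norm_of_nonneg (by positivity)]
  calc (1 + log x) * (exp 1 * t) ^ x * (x ^ x * exp (-x) / Gamma (x + 1))
      ≤ x * (exp 1 * t) ^ x * exp 1 := by
        gcongr
        linarith [log_le_sub_one_of_pos hx0]
    _ = exp 1 * (x * (exp 1 * t) ^ x) := by ring

lemma inv_le_two_mul_exp_one_mul_hyperexpIntegrand {t x : ℝ} (ht : exp (-1) ≤ t)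
    (hx : 1 ≤ x) :
    x⁻¹ ≤ 2 * exp 1 * hyperexpIntegrand t x := by
  have hx0 : 0 < x := by linarith
  have hGamma := Gamma_pos_of_pos (by linarith : 0 < x + 1)
  have hratio : (2 * exp 1 * x)⁻¹ ≤ x ^ x * exp (-x) / Gamma (x + 1) := by
    rw [le_div_iff₀ hGamma, inv_mul_le_iff₀ (by positivity)]
    exact Gamma_add_one_le_of_one_le hx
  have hbase : 1 ≤ exp 1 * t := by
    calc (1 : ℝ) = exp 1 * exp (-1) := by rw [← exp_add]; simp
      _ ≤ exp 1 * t := by gcongr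
  have hfactor : 1 ≤ (1 + log x) * (exp 1 * t) ^ x :=
    one_le_mul_of_one_le_of_one_le (by linarith [log_nonneg hx]) (one_le_rpow hbase hx0.le)
  rw [hyperexpIntegrand_eq ((exp_pos _).le.trans ht)]
  calc x⁻¹ = 2 * exp 1 * (2 * exp 1 * x)⁻¹ := by field_simp
    _ ≤ 2 * exp 1 * (x ^ x * exp (-x) / Gamma (x + 1)) := by gcongr
    _ ≤ 2 * exp 1 * ((1 + log x) * (exp 1 * t) ^ x * (x ^ x * exp (-x) / Gamma (x + 1))) := by
        gcongr
        exact le_mul_of_one_le_left (by positivity) hfactor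

theorem inverse_gamma_hyperexp_phase_transition (t : ℝ) (ht : 0 < t) :
    IntegrableOn
      (fun x : ℝ => (1 + Real.log x) * x ^ x * t ^ x / Real.Gamma (x + 1))
      (Set.Ioi (1 : ℝ))
      ↔ t < Real.exp (-1) := by
  change IntegrableOn (hyperexpIntegrand t) (Ioi 1) ↔ _
  constructor
  · intro hf
    by_contra! hte
    refine not_integrableOn_Ioi_inv ((hf.const_mul (2 * exp 1)).mono'
      measurable_inv.aestronglyMeasurable ?_)
    filter_upwards [ae_restrict_mem measurableSet_Ioi] with x (hx : 1 < x)
    rw [norm_of_nonneg (inv_nonneg.2 (by linarith))]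
    exact inv_le_two_mul_exp_one_mul_hyperexpIntegrand hte hx.le
  · intro hte
    have hdecay : exp 1 * t < 1 := by
      calc exp 1 * t < exp 1 * exp (-1) := by gcongr
        _ = 1 := by rw [← exp_add]; simp
    refine (((integrableOn_Ioi_mul_rpow_of_lt_one (by positivity) hdecay).mono_set
      (Ioi_subset_Ioi zero_le_one)).const_mul (exp 1)).mono'
      (((continuousOn_hyperexpIntegrand ht).mono (Ioi_subset_Ioi zero_le_one)).aestronglyMeasurable
        measurableSet_Ioi) ?_
    filter_upwards [ae_restrict_mem measurableSet_Ioi] with x (hx : 1 < x)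
    exact norm_hyperexpIntegrand_le ht hx.le
end

section
/- Let (Ω, ℱ, P) be a probability space, let a, b > 0, and let X, Y : Ω → ℝ be independent random variables such that the law of X is the Gamma distribution with shape a and rate 1 and the law of Y is the Gamma distribution with shape b and rate 1. Then the conditional expectation of X given the σ-algebra generated by X + Y equals (a/(a+b))·(X + Y) almost surely. -/
/-!
Size-biasing a Gamma law raises its shape: `x • Γ(a, r) = (a / r) • Γ(a + 1, r)`. Hence, for
independent `X ~ Γ(a, r)`, `Y ~ Γ(b, r)` and a Borel set `B`, `E[X; X + Y ∈ B]` is `a / r` times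
the probability that `X' + Y ∈ B`, where `X' ~ Γ(a + 1, r)` is independent of `Y`. Gamma laws of a
common rate convolve by adding shapes (the convolution density at `s` factors as the
`Γ(u + v, r)` density at `s` times a Beta density in `y / s`), so `X' + Y ~ Γ(a + b + 1, r)`.
Exchanging the roles of `X` and `Y` gives `E[X; X + Y ∈ B] : E[Y; X + Y ∈ B] = a : b`, which is
the defining property of `E[X | X + Y] = a / (a + b) • (X + Y)`.
-/

open MeasureTheory ProbabilityTheory Real Set
open scoped ENNReal

lemma lintegral_comp_div {f : ℝ → ℝ≥0∞} (hf : Measurable f) {s : ℝ} (hs : s ≠ 0) :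
    ∫⁻ y, f (y / s) = ENNReal.ofReal |s| * ∫⁻ y, f y := by
  simp_rw [div_eq_mul_inv]
  rw [← lintegral_map hf (measurable_mul_const _), Real.map_volume_mul_right (inv_ne_zero hs),
    lintegral_smul_measure, inv_inv, smul_eq_mul]

namespace ProbabilityTheory

variable {u v r : ℝ}

@[fun_prop]
lemma measurable_gammaPDF (u r : ℝ) : Measurable (gammaPDF u r) :=
  (measurable_gammaPDFReal u r).ennreal_ofReal

instance (u r : ℝ) : SFinite (gammaMeasure u r) := by
  unfold gammaMeasure; infer_instance

lemma ae_nonneg_gammaMeasure (u r : ℝ) : ∀ᵐ x ∂gammaMeasure u r, 0 ≤ x := by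
  rw [ae_iff]
  simp only [not_le]
  rw [show {x : ℝ | x < 0} = Iio 0 from rfl, gammaMeasure, withDensity_apply _ measurableSet_Iio,
    lintegral_gammaPDF_of_nonpos le_rfl]

section Convolution

lemma gammaPDFReal_mul_gammaPDFReal_sub (hu : 0 < u) (hv : 0 < v) (hr : 0 < r) {s y : ℝ}
    (hy : 0 < y) (hys : y < s) :
    gammaPDFReal u r y * gammaPDFReal v r (s - y)
      = s⁻¹ * gammaPDFReal (u + v) r s * betaPDFReal u v (y / s) := by
  have hs : 0 < s := hy.trans hys
  have hsy : 0 < s - y := sub_pos.2 hys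
  rw [gammaPDFReal, gammaPDFReal, gammaPDFReal, betaPDFReal, if_pos hy.le, if_pos hsy.le,
    if_pos hs.le, if_pos ⟨div_pos hy hs, (div_lt_one hs).2 hys⟩, beta,
    show 1 - y / s = (s - y) / s by field_simp, div_rpow hy.le hs.le, div_rpow hsy.le hs.le,
    rpow_add hr, show u + v - 1 = (u - 1) + (v - 1) + 1 by ring, rpow_add hs, rpow_add hs,
    rpow_one, show -(r * s) = -(r * y) + -(r * (s - y)) by ring, exp_add]
  have := Gamma_pos_of_pos hu
  have := Gamma_pos_of_pos hv
  have := Gamma_pos_of_pos (add_pos hu hv)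
  have := rpow_pos_of_pos hs (u - 1)
  have := rpow_pos_of_pos hs (v - 1)
  field_simp

lemma lconvolution_gammaPDF_of_pos (hu : 0 < u) (hv : 0 < v) (hr : 0 < r) {s : ℝ} (hs : 0 < s) :
    (gammaPDF u r ⋆ₗ gammaPDF v r) s = gammaPDF (u + v) r s := by
  have hc : 0 ≤ s⁻¹ * gammaPDFReal (u + v) r s :=
    mul_nonneg (inv_nonneg.2 hs.le) (gammaPDFReal_nonneg (add_pos hu hv) hr s)
  -- `gammaPDF u r 0` need not vanish, so the two integrands only agree off `{0, s}`.
  have hbeta : (fun y => gammaPDF u r y * gammaPDF v r (-y + s))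
      =ᵐ[volume] fun y => ENNReal.ofReal (s⁻¹ * gammaPDFReal (u + v) r s) * betaPDF u v (y / s) := by
    filter_upwards [(Set.toFinite {0, s}).countable.ae_notMem volume] with y hy
    simp only [mem_insert_iff, mem_singleton_iff, not_or] at hy
    rw [neg_add_eq_sub]
    rcases lt_or_gt_of_ne hy.1 with hy0 | hy0
    · rw [gammaPDF_of_neg hy0, betaPDF_eq_zero_of_nonpos (div_nonpos_of_nonpos_of_nonneg hy0.le hs.le),
        zero_mul, mul_zero]
    rcases lt_or_gt_of_ne hy.2 with hys | hys
    · rw [gammaPDF, gammaPDF, betaPDF, ← ENNReal.ofReal_mul (gammaPDFReal_nonneg hu hr _),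
        ← ENNReal.ofReal_mul hc, gammaPDFReal_mul_gammaPDFReal_sub hu hv hr hy0 hys]
    · rw [gammaPDF_of_neg (sub_neg.2 hys), betaPDF_eq_zero_of_one_le ((one_le_div hs).2 hys.le),
        mul_zero, mul_zero]
  have hm : Measurable (betaPDF u v) := (measurable_betaPDFReal u v).ennreal_ofReal
  rw [lconvolution_def, lintegral_congr_ae hbeta,
    lintegral_const_mul (f := fun y => betaPDF u v (y / s)) _ (hm.comp (measurable_id.div_const s)),
    lintegral_comp_div hm hs.ne', lintegral_betaPDF_eq_one hu hv, mul_one, abs_of_pos hs,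
    ← ENNReal.ofReal_mul hc, gammaPDF, mul_comm, mul_inv_cancel_left₀ hs.ne']

lemma lconvolution_gammaPDF_of_neg {s : ℝ} (hs : s < 0) : (gammaPDF u r ⋆ₗ gammaPDF v r) s = 0 := by
  refine lintegral_eq_zero_of_ae_eq_zero (ae_of_all _ fun y => ?_)
  rcases lt_or_ge y 0 with hy | hy
  · simp [gammaPDF_of_neg hy]
  · simp [gammaPDF_of_neg (by linarith : -y + s < 0)]

theorem gammaMeasure_conv_gammaMeasure (hu : 0 < u) (hv : 0 < v) (hr : 0 < r) :
    gammaMeasure u r ∗ gammaMeasure v r = gammaMeasure (u + v) r := by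
  rw [gammaMeasure, gammaMeasure, gammaMeasure,
    conv_withDensity_eq_lconvolution (measurable_gammaPDF u r) (measurable_gammaPDF v r)]
  refine withDensity_congr_ae ?_
  filter_upwards [(Set.countable_singleton 0).ae_notMem volume] with s hs
  rcases lt_or_gt_of_ne hs with hs | hs
  · rw [lconvolution_gammaPDF_of_neg hs, gammaPDF_of_neg hs]
  · exact lconvolution_gammaPDF_of_pos hu hv hr hs

end Convolution

section SizeBias

lemma gammaPDFReal_mul_eq_gammaPDFReal_add_one (hu : 0 < u) (hr : 0 < r) (x : ℝ) :
    gammaPDFReal u r x * x = u / r * gammaPDFReal (u + 1) r x := by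
  rcases lt_or_ge x 0 with hx | hx
  · simp [gammaPDFReal, hx.not_ge]
  have hpow : x ^ u = x ^ (u - 1) * x := by
    simpa using rpow_add' hx (y := u - 1) (z := 1) (by simpa using hu.ne')
  rw [gammaPDFReal, gammaPDFReal, if_pos hx, if_pos hx, Gamma_add_one hu.ne', rpow_add_one hr.ne',
    add_sub_cancel_right, hpow]
  have := Gamma_pos_of_pos hu
  field_simp

lemma gammaMeasure_withDensity_ofReal (hu : 0 < u) (hr : 0 < r) :
    (gammaMeasure u r).withDensity ENNReal.ofReal
      = ENNReal.ofReal (u / r) • gammaMeasure (u + 1) r := by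
  rw [gammaMeasure, gammaMeasure,
    ← withDensity_mul _ (measurable_gammaPDF u r) ENNReal.measurable_ofReal,
    ← withDensity_smul _ (measurable_gammaPDF (u + 1) r)]
  congr 1
  ext x
  simp only [Pi.mul_apply, Pi.smul_apply, smul_eq_mul, gammaPDF]
  rw [← ENNReal.ofReal_mul (gammaPDFReal_nonneg hu hr x), ← ENNReal.ofReal_mul (by positivity),
    gammaPDFReal_mul_eq_gammaPDFReal_add_one hu hr]

lemma integrable_id_gammaMeasure (hu : 0 < u) (hr : 0 < r) :
    Integrable (fun x => x) (gammaMeasure u r) := by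
  have := isProbabilityMeasure_gammaMeasure (by linarith : 0 < u + 1) hr
  refine ⟨aestronglyMeasurable_id, (hasFiniteIntegral_iff_ofReal (ae_nonneg_gammaMeasure u r)).2 ?_⟩
  rw [← setLIntegral_univ, ← withDensity_apply _ MeasurableSet.univ,
    gammaMeasure_withDensity_ofReal hu hr, Measure.smul_apply, measure_univ, smul_eq_mul, mul_one]
  exact ENNReal.ofReal_lt_top

variable {Ω : Type*} [MeasurableSpace Ω] {P : Measure Ω} [IsFiniteMeasure P] {X Y : Ω → ℝ}
  {a b : ℝ}

theorem setLIntegral_preimage_add_ofReal_of_gamma (ha : 0 < a) (hb : 0 < b) (hr : 0 < r)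
    (hX : Measurable X) (hY : Measurable Y) (hXY : IndepFun X Y P)
    (hXlaw : P.map X = gammaMeasure a r) (hYlaw : P.map Y = gammaMeasure b r)
    {B : Set ℝ} (hB : MeasurableSet B) :
    ∫⁻ ω in (fun ω => X ω + Y ω) ⁻¹' B, ENNReal.ofReal (X ω) ∂P
      = ENNReal.ofReal (a / r) * gammaMeasure (a + b + 1) r B := by
  have hjoint : P.map (fun ω => (X ω, Y ω)) = (gammaMeasure a r).prod (gammaMeasure b r) := by
    rw [← hXlaw, ← hYlaw]
    exact (indepFun_iff_map_prod_eq_prod_map_map hX.aemeasurable hY.aemeasurable).1 hXY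
  have hsum : MeasurableSet ((fun p : ℝ × ℝ => p.1 + p.2) ⁻¹' B) := measurable_add hB
  calc ∫⁻ ω in (fun ω => X ω + Y ω) ⁻¹' B, ENNReal.ofReal (X ω) ∂P
      = ∫⁻ p in (fun p : ℝ × ℝ => p.1 + p.2) ⁻¹' B, ENNReal.ofReal p.1
          ∂P.map (fun ω => (X ω, Y ω)) :=
        (setLIntegral_map hsum (ENNReal.measurable_ofReal.comp measurable_fst) (hX.prodMk hY)).symm
    _ = ((gammaMeasure a r).withDensity ENNReal.ofReal).prod (gammaMeasure b r)
          ((fun p : ℝ × ℝ => p.1 + p.2) ⁻¹' B) := by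
        rw [hjoint, prod_withDensity_left ENNReal.measurable_ofReal, withDensity_apply _ hsum]
    _ = ENNReal.ofReal (a / r) * (gammaMeasure (a + 1) r ∗ gammaMeasure b r) B := by
        rw [gammaMeasure_withDensity_ofReal ha hr, Measure.prod_smul_left, Measure.smul_apply,
          Measure.conv, Measure.map_apply measurable_add hB, smul_eq_mul]
    _ = ENNReal.ofReal (a / r) * gammaMeasure (a + b + 1) r B := by
        rw [gammaMeasure_conv_gammaMeasure (by linarith) hb hr, add_right_comm]

theorem setIntegral_preimage_add_of_gamma (ha : 0 < a) (hb : 0 < b) (hr : 0 < r)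
    (hX : Measurable X) (hY : Measurable Y) (hXY : IndepFun X Y P)
    (hXlaw : P.map X = gammaMeasure a r) (hYlaw : P.map Y = gammaMeasure b r)
    {B : Set ℝ} (hB : MeasurableSet B) :
    ∫ ω in (fun ω => X ω + Y ω) ⁻¹' B, X ω ∂P = a / r * (gammaMeasure (a + b + 1) r).real B := by
  have hXnn : 0 ≤ᵐ[P] X :=
    ae_of_ae_map (p := (0 ≤ ·)) hX.aemeasurable (hXlaw ▸ ae_nonneg_gammaMeasure a r)
  rw [integral_eq_lintegral_of_nonneg_ae (ae_restrict_of_ae hXnn) hX.aestronglyMeasurable.restrict,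
    setLIntegral_preimage_add_ofReal_of_gamma ha hb hr hX hY hXY hXlaw hYlaw hB, ENNReal.toReal_mul,
    ENNReal.toReal_ofReal (div_nonneg ha.le hr.le), measureReal_def]

end SizeBias

end ProbabilityTheory

theorem gamma_conditional_projection
    {Ω : Type*} [MeasurableSpace Ω] (P : Measure Ω) [IsProbabilityMeasure P]
    (a b : ℝ) (ha : 0 < a) (hb : 0 < b)
    (X Y : Ω → ℝ) (hX : Measurable X) (hY : Measurable Y)
    (hindep : IndepFun X Y P)
    (hXlaw : Measure.map X P = gammaMeasure a 1)
    (hYlaw : Measure.map Y P = gammaMeasure b 1) :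
    P[X | MeasurableSpace.comap (fun ω => X ω + Y ω) (borel ℝ)]
      =ᵐ[P] fun ω => (a / (a + b)) * (X ω + Y ω) := by
  have hXint : Integrable X P :=
    (integrable_map_measure aestronglyMeasurable_id hX.aemeasurable).1
      (hXlaw ▸ integrable_id_gammaMeasure ha one_pos)
  have hYint : Integrable Y P :=
    (integrable_map_measure aestronglyMeasurable_id hY.aemeasurable).1
      (hYlaw ▸ integrable_id_gammaMeasure hb one_pos)
  have hS : Measurable fun ω => X ω + Y ω := hX.add hY
  rw [← BorelSpace.measurable_eq]
  refine (ae_eq_condExp_of_forall_setIntegral_eq hS.comap_le hXint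
    (fun _ _ _ => ((hXint.add hYint).const_mul _).integrableOn) ?_
    ((comap_measurable _).const_mul _).aestronglyMeasurable).symm
  rintro _ ⟨B, hB, rfl⟩ -
  have hXset := setIntegral_preimage_add_of_gamma ha hb one_pos hX hY hindep hXlaw hYlaw hB
  have hYset := setIntegral_preimage_add_of_gamma hb ha one_pos hY hX hindep.symm hYlaw hXlaw hB
  simp only [add_comm (Y _), add_comm b a] at hYset
  rw [integral_const_mul, integral_add' hXint.integrableOn hYint.integrableOn, hXset, hYset]
  field_simp
end

section
/- Let u : ℕ → ℝ be a sequence with values in [0, 1] whose range is dense in [0, 1], and let h : ℕ → ℝ be a summable sequence with h(n) > 0 for all n. Define F : ℝ → ℝ by F(t) = Σ_{n : u(n) ≤ t} h(n) (the sum of h(n) over all n with u(n) ≤ t), and define G(v) = inf { t ∈ [0, 1] : v < F(t) }. Then G is continuous on the interval [0, S), where S = Σ_n h(n). -/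
/-!
Dense jump locations make `F` strictly increasing on `[0, 1]`, and the generalized inverse of a
strictly increasing function has no jumps. It is upper semicontinuous because `{v | v < F t}` is
open; for lower semicontinuity at `v`, points `t₂ < t₃` below `G v` give the strict gap
`F t₂ < F t₃ ≤ v`, so `G ≥ t₂` on a neighbourhood of `v`.
-/

open Set Filter Topology

section JumpFunction

variable {ι α : Type*} {u : ι → α} {h : ι → ℝ}

noncomputable def jumpFunction [Preorder α] (u : ι → α) (h : ι → ℝ) (t : α) : ℝ :=
  ∑' i, {i | u i ≤ t}.indicator h i

theorem jumpFunction_of_forall_le [Preorder α] {t : α} (hu : ∀ i, u i ≤ t) :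
    jumpFunction u h t = ∑' i, h i :=
  tsum_congr fun i => indicator_of_mem (show i ∈ {i | u i ≤ t} from hu i) h

theorem jumpFunction_add_le [Preorder α] (h0 : 0 ≤ h) (hs : Summable h) {s t : α} {i : ι}
    (hsi : s < u i) (hit : u i ≤ t) :
    jumpFunction u h s + h i ≤ jumpFunction u h t := by
  have hsub : {j | u j ≤ s} ⊆ {j | u j ≤ t} := fun _ hj => le_trans hj (hsi.le.trans hit)
  have hi : i ∈ {j | u j ≤ t} \ {j | u j ≤ s} := ⟨hit, hsi.not_ge⟩
  have hjump := (hs.indicator ({j | u j ≤ t} \ {j | u j ≤ s})).le_tsum i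
    fun j _ => indicator_nonneg (fun j _ => h0 j) j
  rw [indicator_of_mem hi, indicator_sdiff hsub, Pi.sub_def,
    Summable.tsum_sub (hs.indicator _) (hs.indicator _)] at hjump
  unfold jumpFunction
  linarith

theorem strictMonoOn_jumpFunction [LinearOrder α] [TopologicalSpace α] [OrderTopology α]
    [DenselyOrdered α] {s : Set α} [s.OrdConnected] (hdense : s ⊆ closure (range u))
    (hpos : ∀ i, 0 < h i) (hs : Summable h) : StrictMonoOn (jumpFunction u h) s := by
  intro x hx y hy hxy
  obtain ⟨m, hxm, hmy⟩ := exists_between hxy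
  obtain ⟨_, ⟨hxi, hiy⟩, i, rfl⟩ := mem_closure_iff.1
    (hdense (OrdConnected.out ‹_› hx hy ⟨hxm.le, hmy.le⟩)) _ isOpen_Ioo ⟨hxm, hmy⟩
  linarith [jumpFunction_add_le (fun j => (hpos j).le) hs hxi hiy.le, hpos i]

end JumpFunction

section GeneralizedInverse

variable {α β : Type*} [ConditionallyCompleteLinearOrder α] [LinearOrder β] {F : α → β}
  {a b t : α} {v : β}

noncomputable def generalizedInverse (F : α → β) (a b : α) (v : β) : α :=
  sInf {t ∈ Icc a b | v < F t}

theorem generalizedInverse_le (ht : t ∈ Icc a b) (hv : v < F t) :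
    generalizedInverse F a b v ≤ t :=
  csInf_le ⟨a, fun _ hs => hs.1.1⟩ ⟨ht, hv⟩

theorem le_generalizedInverse_of_le (hab : a ≤ b) (hv : v < F b) :
    a ≤ generalizedInverse F a b v :=
  le_csInf ⟨b, ⟨hab, le_rfl⟩, hv⟩ fun _ hs => hs.1.1

theorem le_generalizedInverse (hF : MonotoneOn F (Icc a b)) (hv : v < F b) (ht : t ∈ Icc a b)
    (htv : F t ≤ v) : t ≤ generalizedInverse F a b v :=
  le_csInf ⟨b, ⟨ht.1.trans ht.2, le_rfl⟩, hv⟩ fun _ hs =>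
    le_of_not_gt fun hst => (hF hs.1 ht hst.le).trans htv |>.not_gt hs.2

theorem continuousOn_generalizedInverse [TopologicalSpace α] [OrderTopology α] [DenselyOrdered α]
    [TopologicalSpace β] [OrderClosedTopology β] (hab : a ≤ b) (hF : StrictMonoOn F (Icc a b)) :
    ContinuousOn (generalizedInverse F a b) (Iio (F b)) := by
  intro v hv
  refine tendsto_order.2 ⟨fun x hx => ?_, fun x hx => ?_⟩
  · rcases lt_or_ge x a with hxa | hax
    · filter_upwards [self_mem_nhdsWithin] with w hw
      exact hxa.trans_le (le_generalizedInverse_of_le hab hw)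
    obtain ⟨t₂, hx₂, h₂⟩ := exists_between hx
    obtain ⟨t₃, h₂₃, h₃⟩ := exists_between h₂
    have hGb : generalizedInverse F a b v ≤ b := generalizedInverse_le ⟨hab, le_rfl⟩ hv
    have ht₂ : t₂ ∈ Icc a b := ⟨hax.trans hx₂.le, h₂.le.trans hGb⟩
    have ht₃ : t₃ ∈ Icc a b := ⟨ht₂.1.trans h₂₃.le, h₃.le.trans hGb⟩
    have hF₃ : F t₃ ≤ v := le_of_not_gt fun h => (generalizedInverse_le ht₃ h).not_gt h₃
    filter_upwards [self_mem_nhdsWithin,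
      nhdsWithin_le_nhds (Ioi_mem_nhds ((hF ht₂ ht₃ h₂₃).trans_le hF₃))] with w hw hw₂
    exact hx₂.trans_le (le_generalizedInverse hF.monotoneOn hw ht₂ hw₂.le)
  · obtain ⟨t, ⟨ht, hvt⟩, htx⟩ := exists_lt_of_csInf_lt
      (show {t ∈ Icc a b | v < F t}.Nonempty from ⟨b, ⟨hab, le_rfl⟩, hv⟩) hx
    filter_upwards [nhdsWithin_le_nhds (Iio_mem_nhds hvt)] with w hw
    exact (generalizedInverse_le ht hw).trans_lt htx

end GeneralizedInverse

theorem generalized_inverse_of_dense_jumps_continuous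
    (u : ℕ → ℝ) (hu : ∀ n, u n ∈ Set.Icc (0 : ℝ) 1)
    (hdense : Set.Icc (0 : ℝ) 1 ⊆ closure (Set.range u))
    (h : ℕ → ℝ) (hpos : ∀ n, 0 < h n) (hsum : Summable h)
    (F : ℝ → ℝ) (hF : ∀ t, F t = ∑' n, if u n ≤ t then h n else 0)
    (G : ℝ → ℝ) (hG : ∀ v, G v = sInf {t ∈ Set.Icc (0 : ℝ) 1 | v < F t}) :
    ContinuousOn G (Set.Ico (0 : ℝ) (∑' n, h n)) := by
  obtain rfl : F = jumpFunction u h := funext fun t => by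
    simp only [hF, jumpFunction, indicator_apply, mem_ofPred_eq]
  obtain rfl : G = generalizedInverse (jumpFunction u h) 0 1 := funext hG
  have hF₁ : jumpFunction u h 1 = ∑' n, h n := jumpFunction_of_forall_le fun n => (hu n).2
  refine (continuousOn_generalizedInverse zero_le_one
    (strictMonoOn_jumpFunction hdense hpos hsum)).mono ?_
  rw [hF₁]
  exact Ico_subset_Iio_self
end
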